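/- arXiv:1405.3856 — 2 statements merged into one kernel-verified Lean document; each statement's English description precedes it below -/
import Mathlib

section
/- Let λ > 0 and let α, β < 3/2. For all real s < r and x, y ∈ ℝ, one has ∫_s^r ∫_ℝ (r-ρ)^{-α} exp(-λ(x-w)²/(2(r-ρ))) · (ρ-s)^{-β} exp(-λ(w-y)²/(2(ρ-s))) dw dρ = (2π/λ)^{1/2} · B(3/2-α, 3/2-β) · (r-s)^{3/2-α-β} · exp(-λ(x-y)²/(2(r-s))), where B denotes the Beta function. -/
/-!
For fixed `ρ` the `w`-integral is the semigroup property of the heat kernel: completing the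
square shows that the two Gaussians of variances `(r - ρ)/λ` and `(ρ - s)/λ` convolve to the
Gaussian of variance `(r - s)/λ`, with the factor `√(2π/λ) √((r - ρ)(ρ - s)/(r - s))`. The
exponential no longer depends on `ρ`, and what remains is
`∫ (r - ρ)^(1/2 - α) (ρ - s)^(1/2 - β) dρ`, which the substitution `ρ = r - (r - s) u` turns into
`(r - s)^(2 - α - β) B(3/2 - α, 3/2 - β)`.
-/

open MeasureTheory Real

lemma integral_gaussian_mul_gaussian (lam a b x y : ℝ) (hlam : 0 < lam) (ha : 0 < a)
    (hb : 0 < b) :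
    ∫ w : ℝ, exp (-lam * (x - w) ^ 2 / (2 * a)) * exp (-lam * (w - y) ^ 2 / (2 * b)) =
      √(2 * π / lam) * (√a * √b / √(a + b)) * exp (-lam * (x - y) ^ 2 / (2 * (a + b))) := by
  have hab : 0 < a + b := by linarith
  set k : ℝ := lam * (a + b) / (2 * (a * b))
  set m : ℝ := (b * x + a * y) / (a + b)
  have hsquare : ∀ w : ℝ,
      exp (-lam * (x - w) ^ 2 / (2 * a)) * exp (-lam * (w - y) ^ 2 / (2 * b)) =
        exp (-lam * (x - y) ^ 2 / (2 * (a + b))) * exp (-k * (w - m) ^ 2) := by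
    intro w
    rw [← exp_add, ← exp_add]
    congr 1
    simp only [k, m]
    field_simp
    ring
  have hk : π / k = 2 * π / lam * (a * b / (a + b)) := by simp only [k]; field_simp
  simp_rw [hsquare]
  rw [integral_const_mul, integral_sub_right_eq_self (fun w => exp (-k * w ^ 2)) m,
    integral_gaussian, hk, sqrt_mul (by positivity), sqrt_div (mul_pos ha hb).le, sqrt_mul ha.le]
  ring

lemma integral_rpow_mul_one_sub_rpow_eq_beta (p q : ℝ) (hp : 0 < p) (hq : 0 < q) :
    ∫ u in (0 : ℝ)..1, u ^ (p - 1) * (1 - u) ^ (q - 1) = ProbabilityTheory.beta p q := by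
  have hcomplex : ((∫ u in (0 : ℝ)..1, u ^ (p - 1) * (1 - u) ^ (q - 1) : ℝ) : ℂ) =
      Complex.betaIntegral p q := by
    rw [Complex.betaIntegral, ← intervalIntegral.integral_ofReal]
    refine intervalIntegral.integral_congr fun u hu => ?_
    rw [Set.uIcc_of_le zero_le_one] at hu
    push_cast
    rw [Complex.ofReal_cpow hu.1, Complex.ofReal_cpow (sub_nonneg.2 hu.2)]
    push_cast
    ring
  rw [ProbabilityTheory.beta_eq_betaIntegralReal p q hp hq, ← hcomplex, Complex.ofReal_re]

lemma integral_sub_rpow_mul_sub_rpow_eq_beta (p q s r : ℝ) (hp : 0 < p) (hq : 0 < q)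
    (hsr : s < r) :
    ∫ ρ in s..r, (r - ρ) ^ (p - 1) * (ρ - s) ^ (q - 1) =
      ProbabilityTheory.beta p q * (r - s) ^ (p + q - 1) := by
  have hrs : 0 < r - s := sub_pos.2 hsr
  have hsubst := intervalIntegral.integral_comp_sub_mul
    (fun ρ => (r - ρ) ^ (p - 1) * (ρ - s) ^ (q - 1)) (a := 0) (b := 1) hrs.ne' r
  simp only [mul_zero, mul_one, sub_zero, sub_sub_cancel, smul_eq_mul] at hsubst
  have hscale : ∀ u ∈ Set.uIcc (0 : ℝ) 1,
      ((r - s) * u) ^ (p - 1) * (r - (r - s) * u - s) ^ (q - 1) =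
        (r - s) ^ (p + q - 2) * (u ^ (p - 1) * (1 - u) ^ (q - 1)) := by
    intro u hu
    rw [Set.uIcc_of_le zero_le_one] at hu
    rw [show r - (r - s) * u - s = (r - s) * (1 - u) by ring,
      mul_rpow hrs.le hu.1, mul_rpow hrs.le (sub_nonneg.2 hu.2),
      show p + q - 2 = (p - 1) + (q - 1) by ring, rpow_add hrs]
    ring
  rw [intervalIntegral.integral_congr hscale, intervalIntegral.integral_const_mul,
    integral_rpow_mul_one_sub_rpow_eq_beta p q hp hq] at hsubst
  rw [show p + q - 1 = (p + q - 2) + 1 by ring, rpow_add_one hrs.ne']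
  field_simp at hsubst ⊢
  linarith

lemma integral_rpow_mul_gaussian_mul_rpow_mul_gaussian (lam α β a b x y : ℝ) (hlam : 0 < lam)
    (ha : 0 < a) (hb : 0 < b) :
    ∫ w : ℝ, a ^ (-α) * exp (-lam * (x - w) ^ 2 / (2 * a)) *
        (b ^ (-β) * exp (-lam * (w - y) ^ 2 / (2 * b))) =
      √(2 * π / lam) / √(a + b) * exp (-lam * (x - y) ^ 2 / (2 * (a + b))) *
        (a ^ (1 / 2 - α) * b ^ (1 / 2 - β)) := by
  simp_rw [mul_mul_mul_comm (a ^ (-α)), integral_const_mul,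
    integral_gaussian_mul_gaussian lam a b x y hlam ha hb, sqrt_eq_rpow,
    sub_eq_neg_add (1 / 2 : ℝ), rpow_add ha, rpow_add hb]
  ring

theorem stmt4 (lam α β s r x y : ℝ) (hlam : 0 < lam) (hα : α < 3 / 2) (hβ : β < 3 / 2)
    (hsr : s < r) :
    ∫ ρ in s..r, ∫ w : ℝ,
        (r - ρ) ^ (-α) * Real.exp (-lam * (x - w) ^ 2 / (2 * (r - ρ))) *
          ((ρ - s) ^ (-β) * Real.exp (-lam * (w - y) ^ 2 / (2 * (ρ - s)))) =
      Real.sqrt (2 * Real.pi / lam) *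
        (Real.Gamma (3 / 2 - α) * Real.Gamma (3 / 2 - β) /
          Real.Gamma ((3 / 2 - α) + (3 / 2 - β))) *
        (r - s) ^ (3 / 2 - α - β) * Real.exp (-lam * (x - y) ^ 2 / (2 * (r - s))) := by
  have hrs : 0 < r - s := sub_pos.2 hsr
  set E := exp (-lam * (x - y) ^ 2 / (2 * (r - s)))
  have hinner : Set.EqOn
      (fun ρ => ∫ w : ℝ, (r - ρ) ^ (-α) * exp (-lam * (x - w) ^ 2 / (2 * (r - ρ))) *
          ((ρ - s) ^ (-β) * exp (-lam * (w - y) ^ 2 / (2 * (ρ - s)))))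
      (fun ρ => √(2 * π / lam) / √(r - s) * E *
          ((r - ρ) ^ ((3 / 2 - α) - 1) * (ρ - s) ^ ((3 / 2 - β) - 1))) (Set.Ioo s r) := by
    intro ρ hρ
    dsimp only
    have hsplit : r - ρ + (ρ - s) = r - s := sub_add_sub_cancel r ρ s
    rw [integral_rpow_mul_gaussian_mul_rpow_mul_gaussian lam α β _ _ x y hlam
      (sub_pos.2 hρ.2) (sub_pos.2 hρ.1), hsplit, show (3 / 2 - α) - 1 = 1 / 2 - α by ring,
      show (3 / 2 - β) - 1 = 1 / 2 - β by ring]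
  rw [intervalIntegral.integral_congr_Ioo_of_le hsr.le hinner,
    intervalIntegral.integral_const_mul,
    integral_sub_rpow_mul_sub_rpow_eq_beta _ _ s r (by linarith) (by linarith) hsr,
    ProbabilityTheory.beta,
    show (3 / 2 - α) + (3 / 2 - β) - 1 = (3 / 2 - α - β) + 1 / 2 by ring, rpow_add hrs,
    sqrt_eq_rpow (r - s)]
  have hpos : 0 < (r - s) ^ (1 / 2 : ℝ) := rpow_pos_of_pos hrs _
  field_simp
end

section
/- Let X and Y be Polish spaces and f : X → Y a continuous injective map. Then for every Borel set A ⊆ X, the image f(A) is a Borel subset of Y; in particular f is a Borel isomorphism onto its image. -/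
theorem stmt9 {X Y : Type*} [TopologicalSpace X] [PolishSpace X] [MeasurableSpace X]
    [BorelSpace X] [TopologicalSpace Y] [PolishSpace Y] [MeasurableSpace Y] [BorelSpace Y]
    (f : X → Y) (hf : Continuous f) (hinj : Function.Injective f) :
    (∀ A : Set X, MeasurableSet A → MeasurableSet (f '' A)) ∧ MeasurableEmbedding f := by
  have hemb : MeasurableEmbedding f := hf.measurableEmbedding hinj
  exact ⟨fun _ hA => hemb.measurableSet_image' hA, hemb⟩
end
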